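/- arXiv:1503.08338 — 4 statements merged into one kernel-verified Lean document; each statement's English description precedes it below -/
import Mathlib

section
/- Let T be the theory of dense linear orders without endpoints and let κ be a singular cardinal with κ ≥ |T|. Then every κ-saturated model of T is κ⁺-saturated. Consequently T has no exactly-κ-saturated model for singular κ. -/
/-!
In a dense linear order without endpoints the truth of a formula depends only on the order type
of its parameters (a back-and-forth induction on formulas). So a finitely satisfiable type `p(x)`
over a parameter set `A` is realized by any `x` in the cut of `A` singled out by an ultrafilter
containing the solution sets of the formulas of `p`. If `|A| ≤ κ` with `κ` singular, each side of
that cut has a cofinal subset of size `< κ`: embed it into `κ`; either a cofinal part of it lies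
in an initial segment of `κ`, or choosing, for each `c` in a cofinal subset of `κ` of size
`cf κ < κ`, an element above everything sent below `c` gives one. The cut is then pinned down by
fewer than `κ` parameters, and `κ`-saturation fills it.
-/

open FirstOrder Language Cardinal

namespace Paper

/-- `M` is `κ`-saturated: every set of formulas in one free variable with fewer than `κ`
parameters which is finitely satisfiable in `M` is realized in `M`. -/
def IsSaturated (L : FirstOrder.Language) (M : Type) [L.Structure M] (lam : Cardinal) : Prop :=
  ∀ (α : Type) (v : α → M), #α < lam →
    ∀ p : Set (L.Formula (α ⊕ Fin 1)),
      (∀ s : Finset (L.Formula (α ⊕ Fin 1)), ↑s ⊆ p →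
        ∃ x : M, ∀ φ ∈ s, φ.Realize (Sum.elim v fun _ => x)) →
      ∃ x : M, ∀ φ ∈ p, φ.Realize (Sum.elim v fun _ => x)

section OrderType

variable {ι ι' M : Type*}

def SameOrderOn [LE M] (s : Set ι) (u u' : ι → M) : Prop :=
  ∀ i ∈ s, ∀ j ∈ s, u i ≤ u j ↔ u' i ≤ u' j

def SameCutOn [LE M] (s : Set ι) (u u' : ι → M) (b b' : M) : Prop :=
  ∀ i ∈ s, (u i ≤ b ↔ u' i ≤ b') ∧ (b ≤ u i ↔ b' ≤ u' i)

theorem SameCutOn.symm [LE M] {s : Set ι} {u u' : ι → M} {b b' : M}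
    (h : SameCutOn s u u' b b') : SameCutOn s u' u b' b :=
  fun i hi => ⟨(h i hi).1.symm, (h i hi).2.symm⟩

namespace SameOrderOn

variable [LinearOrder M] {s : Set ι} {u u' : ι → M}

theorem symm (h : SameOrderOn s u u') : SameOrderOn s u' u :=
  fun i hi j hj => (h i hi j hj).symm

theorem mono {t : Set ι} (h : SameOrderOn s u u') (hts : t ⊆ s) : SameOrderOn t u u' :=
  fun i hi j hj => h i (hts hi) j (hts hj)

theorem exists_sameCutOn [DenselyOrdered M] [NoMinOrder M] [NoMaxOrder M]
    (hs : s.Finite) (h : SameOrderOn s u u') (b : M) : ∃ b', SameCutOn s u u' b b' := by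
  have hlt : ∀ i ∈ s, ∀ j ∈ s, u i < u j ↔ u' i < u' j := fun i hi j hj => by
    simp only [lt_iff_not_ge, h j hj i hi]
  by_cases hb : ∃ i ∈ s, u i = b
  · obtain ⟨i₀, hi₀, rfl⟩ := hb
    exact ⟨u' i₀, fun i hi => ⟨h i hi i₀ hi₀, h i₀ hi₀ i hi⟩⟩
  push Not at hb
  have : Nonempty M := ⟨b⟩
  obtain ⟨b', hlo, hhi⟩ := Set.Finite.exists_between'
    ((hs.inter_of_left {i | u i < b}).image u') ((hs.inter_of_left {i | b < u i}).image u')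
    (by
      rintro _ ⟨i, ⟨hi, hib⟩, rfl⟩ _ ⟨j, ⟨hj, hbj⟩, rfl⟩
      exact (hlt i hi j hj).1 (hib.trans hbj))
  refine ⟨b', fun i hi => ?_⟩
  rcases lt_or_gt_of_ne (hb i hi) with hib | hbi
  · have := hlo _ ⟨i, ⟨hi, hib⟩, rfl⟩
    exact ⟨iff_of_true hib.le this.le, iff_of_false hib.not_ge this.not_ge⟩
  · have := hhi _ ⟨i, ⟨hi, hbi⟩, rfl⟩
    exact ⟨iff_of_false hbi.not_ge this.not_ge, iff_of_true hbi.le this.le⟩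

theorem of_sameCutOn (h : SameOrderOn s u u') {b b' : M} (hb : SameCutOn s u u' b b')
    {t : Set ι'} {w w' : ι' → M}
    (ht : ∀ z ∈ t, (w z = b ∧ w' z = b') ∨ ∃ i ∈ s, w z = u i ∧ w' z = u' i) :
    SameOrderOn t w w' := by
  intro z hz z' hz'
  rcases ht z hz with ⟨hz, hz₁⟩ | ⟨i, hi, hz, hz₁⟩ <;>
    rcases ht z' hz' with ⟨hz', hz₁'⟩ | ⟨j, hj, hz', hz₁'⟩ <;> rw [hz, hz₁, hz', hz₁']
  · exact iff_of_true le_rfl le_rfl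
  · exact (hb j hj).2
  · exact (hb i hi).1
  · exact h i hi j hj

theorem snoc {β : Type*} {n : ℕ} {F : Set β} {v v' : β → M} {xs xs' : Fin n → M}
    (h : SameOrderOn (Sum.inl '' F ∪ Set.range Sum.inr) (Sum.elim v xs) (Sum.elim v' xs'))
    {b b' : M}
    (hb : SameCutOn (Sum.inl '' F ∪ Set.range Sum.inr) (Sum.elim v xs) (Sum.elim v' xs') b b') :
    SameOrderOn (Sum.inl '' F ∪ Set.range Sum.inr)
      (Sum.elim v (Fin.snoc xs b)) (Sum.elim v' (Fin.snoc xs' b')) := by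
  refine h.of_sameCutOn hb ?_
  rintro _ (⟨a, ha, rfl⟩ | ⟨k, rfl⟩)
  · exact Or.inr ⟨Sum.inl a, Or.inl ⟨a, ha, rfl⟩, rfl, rfl⟩
  · induction k using Fin.lastCases with
    | last => exact Or.inl ⟨by simp, by simp⟩
    | cast k => exact Or.inr ⟨Sum.inr k, Or.inr ⟨k, rfl⟩, by simp, by simp⟩

end SameOrderOn

end OrderType

theorem cof_lt_of_not_isRegular {β : Type*} [LinearOrder β] {κ : Cardinal}
    (hκ : ℵ₀ ≤ κ) (hsing : ¬ κ.IsRegular) (hβ : #β ≤ κ) : Order.cof β < κ := by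
  have hcof : κ.ord.cof < κ :=
    (Ordinal.cof_ord_le κ).lt_of_ne fun h => hsing ⟨hκ, h.ge⟩
  obtain ⟨C, hC, hCcard⟩ := Order.exists_cof_eq κ.ord.ToType
  rw [Ordinal.cof_toType] at hCcard
  obtain ⟨g⟩ : Nonempty (β ↪ κ.ord.ToType) := by
    rwa [← Cardinal.le_def, Cardinal.mk_toType, Cardinal.card_ord]
  by_cases hbdd : ∃ c ∈ C, IsCofinal {b | g b ≤ c}
  · obtain ⟨c, -, hc⟩ := hbdd
    calc Order.cof β ≤ #{b | g b ≤ c} := Order.cof_le hc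
      _ ≤ #(Set.Iic c) := Cardinal.mk_le_of_injective (f := fun b => ⟨g b.1, b.2⟩)
          fun a b hab => Subtype.ext (g.injective (congrArg Subtype.val hab))
      _ < #κ.ord.ToType := Cardinal.mk_Iic_lt c (by simp) (by simpa using hκ)
      _ = κ := by simp
  · push Not at hbdd
    choose f hf using fun c hc => not_isCofinal_iff.1 (hbdd c hc)
    have hrange : IsCofinal (Set.range fun c : C => f c.1 c.2) := by
      intro b
      obtain ⟨c, hcC, hbc⟩ := hC (g b)
      exact ⟨_, ⟨⟨c, hcC⟩, rfl⟩, (hf c hcC b hbc).le⟩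
    calc Order.cof β ≤ #(Set.range fun c : C => f c.1 c.2) := Order.cof_le hrange
      _ ≤ #C := Cardinal.mk_range_le
      _ < κ := hCcard ▸ hcof

theorem exists_cofinal_subset_card_lt {β : Type*} [LinearOrder β] {κ : Cardinal}
    (hκ : ℵ₀ ≤ κ) (hsing : ¬ κ.IsRegular) {S : Set β} (hS : #S ≤ κ) :
    ∃ T ⊆ S, #T < κ ∧ ∀ s ∈ S, ∃ t ∈ T, s ≤ t := by
  obtain ⟨T, hT, hTcard⟩ := Order.exists_cof_eq S
  refine ⟨Subtype.val '' T, Set.image_subset_iff.2 fun t _ => t.2,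
    mk_image_le.trans_lt (hTcard ▸ cof_lt_of_not_isRegular hκ hsing hS), fun s hs => ?_⟩
  obtain ⟨t, ht, hst⟩ := hT ⟨s, hs⟩
  exact ⟨t, ⟨t, ht, rfl⟩, hst⟩

theorem exists_ultrafilter_forall_eventually_realize {L : FirstOrder.Language} {M : Type*}
    [L.Structure M] {β : Type*} (v : β → M) (p : Set (L.Formula (β ⊕ Fin 1)))
    (hp : ∀ s : Finset (L.Formula (β ⊕ Fin 1)), ↑s ⊆ p →
      ∃ x : M, ∀ φ ∈ s, φ.Realize (Sum.elim v fun _ => x)) :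
    ∃ U : Ultrafilter M, ∀ φ ∈ p, ∀ᶠ x in U, φ.Realize (Sum.elim v fun _ => x) := by
  classical
  obtain ⟨U, hU⟩ := Ultrafilter.exists_ultrafilter_of_finite_inter_nonempty
    ((fun φ => {x | φ.Realize (Sum.elim v fun _ => x)}) '' p) fun T hT => by
      obtain ⟨s, hsp, rfl⟩ := Finset.subset_set_image_iff.1 hT
      obtain ⟨x, hx⟩ := hp s hsp
      exact ⟨x, by simpa using hx⟩
  exact ⟨U, fun φ hφ => hU ⟨φ, hφ, rfl⟩⟩

section DenseLinearOrder

variable {M : Type} [Language.order.Structure M] [LinearOrder M]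
  [Language.order.OrderedStructure M]

theorem order_term_eq_var {α : Type*} (t : Language.order.Term α) : ∃ z, t = var z := by
  cases t with
  | var z => exact ⟨z, rfl⟩
  | func f _ => exact isEmptyElim f

theorem mem_of_varFinsetLeft_subset {β : Type*} [DecidableEq β] {n : ℕ} {F : Finset β}
    {z : β ⊕ Fin n} (h : (var z : Language.order.Term (β ⊕ Fin n)).varFinsetLeft ⊆ F) :
    z ∈ Sum.inl '' (F : Set β) ∪ Set.range Sum.inr := by
  cases z <;> simp_all [Term.varFinsetLeft]

def ltFormula {β : Type*} (i j : β) : Language.order.Formula β :=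
  Term.lt (var (Sum.inl i)) (var (Sum.inl j))

@[simp]
theorem realize_ltFormula {β : Type*} (i j : β) (u : β → M) :
    (ltFormula i j).Realize u ↔ u i < u j := by
  simp [ltFormula, Formula.Realize, Term.realize_lt]

variable [DenselyOrdered M] [NoMinOrder M] [NoMaxOrder M]

theorem realize_iff_of_sameOrderOn {β : Type*} [DecidableEq β] {n : ℕ}
    (φ : Language.order.BoundedFormula β n) {v v' : β → M} {xs xs' : Fin n → M}
    (h : SameOrderOn (Sum.inl '' ↑φ.freeVarFinset ∪ Set.range Sum.inr)
      (Sum.elim v xs) (Sum.elim v' xs')) :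
    φ.Realize v xs ↔ φ.Realize v' xs' := by
  induction φ with
  | falsum => rfl
  | equal t₁ t₂ =>
    obtain ⟨z₁, rfl⟩ := order_term_eq_var t₁
    obtain ⟨z₂, rfl⟩ := order_term_eq_var t₂
    simp only [BoundedFormula.Realize, Term.realize_var]
    rw [le_antisymm_iff, le_antisymm_iff]
    refine and_congr (h _ ?_ _ ?_) (h _ ?_ _ ?_) <;> apply mem_of_varFinsetLeft_subset <;>
      simp [BoundedFormula.freeVarFinset]
  | rel R ts =>
    cases R with
    | le =>
      obtain ⟨z₀, h₀⟩ := order_term_eq_var (ts 0)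
      obtain ⟨z₁, h₁⟩ := order_term_eq_var (ts 1)
      have hz₀ := mem_of_varFinsetLeft_subset (h₀ ▸ Finset.subset_biUnion_of_mem
        (fun i => (ts i).varFinsetLeft) (Finset.mem_univ 0))
      have hz₁ := mem_of_varFinsetLeft_subset (h₁ ▸ Finset.subset_biUnion_of_mem
        (fun i => (ts i).varFinsetLeft) (Finset.mem_univ 1))
      change Structure.RelMap (leSymb : Language.order.Relations 2) _ ↔
        Structure.RelMap (leSymb : Language.order.Relations 2) _
      simp only [relMap_leSymb, h₀, h₁, Term.realize_var]
      exact h _ hz₀ _ hz₁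
  | imp φ ψ ihφ ihψ =>
    exact imp_congr (ihφ (h.mono (by gcongr; exact Finset.subset_union_left)))
      (ihψ (h.mono (by gcongr; exact Finset.subset_union_right)))
  | @all k φ ih =>
    have hfin : (Sum.inl '' ↑φ.freeVarFinset ∪ Set.range Sum.inr : Set (β ⊕ Fin k)).Finite :=
      ((φ.freeVarFinset.finite_toSet.image _).union (Set.finite_range _))
    simp only [BoundedFormula.realize_all]
    refine ⟨fun H b' => ?_, fun H b => ?_⟩
    · obtain ⟨b, hb⟩ := h.symm.exists_sameCutOn hfin b'
      exact (ih (h.snoc hb.symm)).1 (H b)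
    · obtain ⟨b', hb⟩ := h.exists_sameCutOn hfin b
      exact (ih (h.snoc hb)).2 (H b')

theorem realize_of_eventually_sameCut {β : Type*} [DecidableEq β]
    (φ : Language.order.Formula (β ⊕ Fin 1)) (v : β → M) {U : Filter M} [U.NeBot] {x : M}
    (hφ : ∀ᶠ y in U, φ.Realize (Sum.elim v fun _ => y))
    (hx : ∀ a, ∀ᶠ y in U, (v a ≤ y ↔ v a ≤ x) ∧ (y ≤ v a ↔ x ≤ v a)) :
    φ.Realize (Sum.elim v fun _ => x) := by
  let F := φ.freeVarFinset.preimage Sum.inl Sum.inl_injective.injOn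
  obtain ⟨y, hyφ, hy⟩ := (hφ.and ((Filter.eventually_all_finset F).2 fun a _ => hx a)).exists
  refine (realize_iff_of_sameOrderOn φ (xs := default) (xs' := default) ?_).1 hyφ
  refine SameOrderOn.of_sameCutOn (s := (F : Set β)) (fun _ _ _ _ => Iff.rfl) hy ?_
  rintro _ (⟨a | k, ha, rfl⟩ | ⟨k, rfl⟩)
  · exact Or.inr ⟨a, Finset.mem_preimage.2 ha, rfl, rfl⟩
  · exact Or.inl ⟨rfl, rfl⟩
  · exact k.elim0

theorem IsSaturated.exists_between [Nonempty M] {κ : Cardinal} (hκ : ℵ₀ ≤ κ)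
    (hsat : IsSaturated Language.order M κ) {L R : Set M} (hL : #L < κ) (hR : #R < κ)
    (hLR : ∀ l ∈ L, ∀ r ∈ R, l < r) : ∃ x, (∀ l ∈ L, l < x) ∧ ∀ r ∈ R, x < r := by
  classical
  let cut : L ⊕ R → Language.order.Formula ((L ⊕ R) ⊕ Fin 1) :=
    Sum.elim (fun l => ltFormula (Sum.inl (Sum.inl l)) (Sum.inr 0))
      (fun r => ltFormula (Sum.inr 0) (Sum.inl (Sum.inr r)))
  let u : L ⊕ R → M := Sum.elim (↑) (↑)
  have realize_cut : ∀ x, ∀ z, (cut z).Realize (Sum.elim u fun _ => x) ↔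
      Sum.elim (fun l : L => (l : M) < x) (fun r : R => x < r) z := by
    rintro x (l | r) <;> simp [cut, u]
  obtain ⟨x, hx⟩ := hsat (L ⊕ R) u (by simpa using add_lt_of_lt hκ hL hR) (Set.range cut) (by
    intro s hs
    obtain ⟨t, -, rfl⟩ := Finset.subset_set_image_iff.1 (Set.image_univ ▸ hs)
    obtain ⟨x, hlo, hhi⟩ := Set.Finite.exists_between'
      ((t.finite_toSet.preimage Sum.inl_injective.injOn).image Subtype.val)
      ((t.finite_toSet.preimage Sum.inr_injective.injOn).image Subtype.val)
      (by rintro _ ⟨l, -, rfl⟩ _ ⟨r, -, rfl⟩; exact hLR l l.2 r r.2)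
    refine ⟨x, ?_⟩
    simp only [Finset.mem_image, forall_exists_index, and_imp, forall_apply_eq_imp_iff₂]
    rintro (l | r) hz <;> simp only [realize_cut, Sum.elim_inl, Sum.elim_inr]
    · exact hlo _ ⟨l, hz, rfl⟩
    · exact hhi _ ⟨r, hz, rfl⟩)
  exact ⟨x, fun l hl => (realize_cut x (.inl ⟨l, hl⟩)).1 (hx _ ⟨_, rfl⟩),
    fun r hr => (realize_cut x (.inr ⟨r, hr⟩)).1 (hx _ ⟨_, rfl⟩)⟩

theorem IsSaturated.exists_eventually_sameCut {κ : Cardinal} (hκ : ℵ₀ ≤ κ)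
    (hsing : ¬ κ.IsRegular) (hsat : IsSaturated Language.order M κ) (U : Ultrafilter M)
    {A : Set M} (hA : #A ≤ κ) :
    ∃ x, ∀ a ∈ A, ∀ᶠ y in U, (a ≤ y ↔ a ≤ x) ∧ (y ≤ a ↔ x ≤ a) := by
  rcases U.le_cofinite_or_eq_pure with hU | ⟨m, rfl⟩
  swap
  · exact ⟨m, fun a _ => by simp⟩
  have : Nonempty M := ⟨(Filter.nonempty_of_mem (f := U) Filter.univ_mem).some⟩
  have hside : ∀ a, (∀ᶠ y in U, a < y) ∨ ∀ᶠ y in U, y < a := fun a => by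
    have hne : ∀ᶠ y in (U : Filter M), y ≠ a := hU (Set.finite_singleton a).compl_mem_cofinite
    exact Ultrafilter.eventually_or.1 (hne.mono fun y hy => lt_or_gt_of_ne hy.symm)
  set Lo := {a ∈ A | ∀ᶠ y in U, a < y}
  set Hi := {a ∈ A | ∀ᶠ y in U, y < a}
  obtain ⟨TL, hTL, hTLcard, hTLcof⟩ :=
    exists_cofinal_subset_card_lt hκ hsing ((mk_subtype_mono fun _ h => h.1).trans hA : #Lo ≤ κ)
  obtain ⟨TH, hTH, hTHcard, hTHcof⟩ := exists_cofinal_subset_card_lt (β := Mᵒᵈ) hκ hsing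
    ((mk_subtype_mono fun _ h => h.1).trans hA : #Hi ≤ κ)
  obtain ⟨x, hxL, hxH⟩ := hsat.exists_between hκ hTLcard hTHcard fun l hl r hr => by
    obtain ⟨y, hly, hyr⟩ := ((hTL hl).2.and (hTH hr).2).exists
    exact hly.trans hyr
  refine ⟨x, fun a ha => ?_⟩
  rcases hside a with h | h
  · obtain ⟨t, ht, hat⟩ := hTLcof a ⟨ha, h⟩
    have hax : a < x := hat.trans_lt (hxL t ht)
    filter_upwards [h] with y hy
    exact ⟨iff_of_true hy.le hax.le, iff_of_false hy.not_ge hax.not_ge⟩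
  · obtain ⟨t, ht, hat⟩ := hTHcof a ⟨ha, h⟩
    have hxa : x < a := (hxH t ht).trans_le hat
    filter_upwards [h] with y hy
    exact ⟨iff_of_false hy.not_ge hxa.not_ge, iff_of_true hy.le hxa.le⟩

theorem IsSaturated.succ_of_not_isRegular {κ : Cardinal} (hκ : ℵ₀ ≤ κ) (hsing : ¬ κ.IsRegular)
    (hsat : IsSaturated Language.order M κ) : IsSaturated Language.order M (Order.succ κ) := by
  classical
  intro α v hα p hp
  obtain ⟨U, hU⟩ := exists_ultrafilter_forall_eventually_realize v p hp
  obtain ⟨x, hx⟩ := hsat.exists_eventually_sameCut hκ hsing U (A := Set.range v)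
    (mk_range_le.trans (Order.lt_succ_iff.1 hα))
  exact ⟨x, fun φ hφ => realize_of_eventually_sameCut φ v (hU φ hφ) fun a => hx _ ⟨a, rfl⟩⟩

end DenseLinearOrder

/-- For the theory of dense linear orders without endpoints and a
singular cardinal `κ ≥ ℵ₀ = |T|`, every `κ`-saturated model is `κ⁺`-saturated
(hence there is no exactly-`κ`-saturated model of DLO for singular `κ`). -/
theorem statement2 (κ : Cardinal) (hκ : Cardinal.aleph0 ≤ κ) (hsing : ¬ κ.IsRegular)
    (M : Type) [Language.order.Structure M] (hM : M ⊨ Language.order.dlo)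
    (hsat : IsSaturated Language.order M κ) :
    IsSaturated Language.order M (Order.succ κ) := by
  classical
  let := Language.order.linearOrderOfModels M
  have : Language.order.OrderedStructure M :=
    inferInstanceAs (@Language.OrderedStructure _ M _ (Language.order.leOfStructure M) _)
  have := Language.order.denselyOrdered_of_dlo M
  have := Language.order.noBotOrder_of_dlo M
  have := Language.order.noTopOrder_of_dlo M
  have := NoBotOrder.to_noMinOrder M
  have := NoTopOrder.to_noMaxOrder M
  exact hsat.succ_of_not_isRegular hκ hsing

end Paper
end

section
/- Let T_rg be the theory of the random graph and let κ be a cardinal with κ > cf(κ) + ℵ₀ (i.e. κ is singular and uncountable). Then T_rg has a model that is κ-saturated but not κ⁺-saturated. -/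
/-!
A graph has the `μ`-extension property if every adjacency pattern over fewer than `μ` vertices
is realised by a new vertex. Between two graphs with the `ℵ₀`-extension property, finite partial
isomorphisms extend back and forth, so such a graph is elementarily equivalent to the Rado graph.
With the `μ`-extension property for some `μ ≥ ℵ₀`, a graph is moreover `μ`-saturated: a type
over fewer than `μ` parameters, finitely satisfied by `F s` for each finite part `s`, is realised
by a vertex whose adjacency to the parameters is the ultrafilter limit of that of the `F s`,
because each formula mentions only finitely many parameters.

For the model, let `#β = κ`, take the well-founded `β`-branching trees with leaves labelled by
`β`, a tree being adjacent to its children, and keep the trees adjacent to fewer than `κ` leaves.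
A node whose children are prescribed realises any pattern over fewer than `κ` kept vertices and
is again kept, while no kept vertex is adjacent to all `κ` leaves, so the finitely satisfiable
type `{R(x, leaf b) : b ∈ β}` is omitted.
-/

open FirstOrder Language Cardinal

namespace Paper

/-- The Rado (random) graph on `ℕ`, via the symmetrized BIT predicate. -/
def radoGraph : SimpleGraph ℕ where
  Adj m n := m ≠ n ∧ (Nat.testBit m n ∨ Nat.testBit n m)
  symm := by
    refine ⟨?_⟩
    intro m n h
    exact ⟨h.1.symm, h.2.symm⟩
  loopless := by
    refine ⟨?_⟩
    intro m h
    exact h.1 rfl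

noncomputable instance radoStructure : Language.graph.Structure ℕ := radoGraph.structure

/-- The complete first-order theory of the countable random graph. -/
noncomputable def Trg : Language.graph.Theory := Language.graph.completeTheory ℕ

def ExtensionProperty {V : Type} (G : SimpleGraph V) (μ : Cardinal) : Prop :=
  ∀ S : Set V, #S < μ → ∀ c : V → Prop, ∃ x ∉ S, ∀ a ∈ S, (G.Adj x a ↔ c a)

theorem ExtensionProperty.mono {V : Type} {G : SimpleGraph V} {μ ν : Cardinal}
    (hG : ExtensionProperty G ν) (hμν : μ ≤ ν) : ExtensionProperty G μ :=
  fun S hS => hG S (hS.trans_le hμν)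

theorem testBit_sum_two_pow (s : Finset ℕ) (i : ℕ) :
    (∑ j ∈ s, 2 ^ j).testBit i = true ↔ i ∈ s := by
  rw [← Nat.mem_bitIndices, ← List.mem_toFinset, Finset.toFinset_bitIndices_sum_two_pow]

theorem extensionProperty_radoGraph : ExtensionProperty radoGraph ℵ₀ := by
  classical
  intro S hS c
  have hfin : S.Finite := lt_aleph0_iff_set_finite.mp hS
  obtain ⟨M, hM⟩ := hfin.bddAbove
  -- `x` is the bit set of the wanted neighbours together with `M + 1`, which makes `x` exceed
  -- every `a ∈ S`, so that `a` has no bit `x`.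
  let T := insert (M + 1) {a ∈ hfin.toFinset | c a}
  let x := ∑ j ∈ T, 2 ^ j
  have hMx : M + 1 < x := Nat.lt_two_pow_self.trans_le
    (Nat.ge_two_pow_of_testBit ((testBit_sum_two_pow T _).2 (Finset.mem_insert_self _ _)))
  have hSx : ∀ a ∈ S, a < x := fun a ha => (Nat.lt_succ_of_le (hM ha)).trans hMx
  refine ⟨x, fun hx => (hSx x hx).false, fun a ha => ?_⟩
  have hax : a.testBit x = false :=
    Nat.testBit_eq_false_of_lt ((hSx a ha).trans Nat.lt_two_pow_self)
  change x ≠ a ∧ (x.testBit a = true ∨ a.testBit x = true) ↔ c a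
  rw [hax, testBit_sum_two_pow]
  have : a ≠ M + 1 := (Nat.lt_succ_of_le (hM ha)).ne
  simp [T, this, (hSx a ha).ne', ha]

def SameAtomicType {V W : Type} (G : SimpleGraph V) (H : SimpleGraph W) {ι : Type} (v : ι → V)
    (w : ι → W) : Prop :=
  ∀ i j, (v i = v j ↔ w i = w j) ∧ (G.Adj (v i) (v j) ↔ H.Adj (w i) (w j))

namespace SameAtomicType

variable {V W : Type} {G : SimpleGraph V} {H : SimpleGraph W} {ι : Type} {v : ι → V}
  {w : ι → W}

theorem symm (h : SameAtomicType G H v w) : SameAtomicType H G w v :=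
  fun i j => ⟨(h i j).1.symm, (h i j).2.symm⟩

theorem comp (h : SameAtomicType G H v w) {κ : Type} (f : κ → ι) :
    SameAtomicType G H (v ∘ f) (w ∘ f) :=
  fun i j => h (f i) (f j)

theorem option_elim' (h : SameAtomicType G H v w) {x : V} {y : W}
    (hxy : ∀ i, (x = v i ↔ y = w i) ∧ (G.Adj x (v i) ↔ H.Adj y (w i))) :
    SameAtomicType G H (Option.elim' x v) (Option.elim' y w)
  | none, none =>
    ⟨iff_of_true rfl rfl, iff_of_false (G.loopless.irrefl x) (H.loopless.irrefl y)⟩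
  | none, some j => hxy j
  | some i, none => ⟨eq_comm.trans ((hxy i).1.trans eq_comm),
      (G.adj_comm _ _).trans ((hxy i).2.trans (H.adj_comm _ _))⟩
  | some i, some j => h i j

theorem exists_option_elim' {μ : Cardinal} (h : SameAtomicType G H v w)
    (hH : ExtensionProperty H μ) (hι : #ι < μ) (x : V) :
    ∃ y, SameAtomicType G H (Option.elim' x v) (Option.elim' y w) := by
  by_cases hx : ∃ i, v i = x
  · obtain ⟨i₀, rfl⟩ := hx
    exact ⟨w i₀, h.option_elim' (h i₀)⟩
  obtain ⟨y, hy, hadj⟩ := hH (Set.range w) (mk_range_le.trans_lt hι)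
    fun z => ∃ i, w i = z ∧ G.Adj x (v i)
  refine ⟨y, h.option_elim' fun i => ⟨iff_of_false (fun he => hx ⟨i, he.symm⟩)
    (fun he => hy ⟨i, he.symm⟩), ?_⟩⟩
  rw [hadj _ ⟨i, rfl⟩]
  exact ⟨fun hxi => ⟨i, rfl, hxi⟩, fun ⟨j, hji, hxj⟩ => (h j i).1.2 hji ▸ hxj⟩

end SameAtomicType

theorem exists_eq_var_of_graph_term {δ : Type} (t : Language.graph.Term δ) :
    ∃ i, t = Term.var i := by
  cases t with
  | var i => exact ⟨i, rfl⟩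
  | func f _ => exact isEmptyElim f

def snocIndex {γ : Type} {n : ℕ} : γ ⊕ Fin (n + 1) → Option (γ ⊕ Fin n)
  | .inl g => some (.inl g)
  | .inr i => Fin.lastCases none (fun j => some (.inr j)) i

theorem sum_elim_snoc {V γ : Type} {n : ℕ} (xs : γ → V) (ys : Fin n → V) (x : V) :
    Sum.elim xs (Fin.snoc ys x) = Option.elim' x (Sum.elim xs ys) ∘ snocIndex := by
  funext i
  rcases i with g | i
  · rfl
  · induction i using Fin.lastCases <;> simp [snocIndex]

section BackAndForth

variable {V W : Type} {G : SimpleGraph V} {H : SimpleGraph W}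

theorem SameAtomicType.realize_boundedFormula_iff (hG : ExtensionProperty G ℵ₀)
    (hH : ExtensionProperty H ℵ₀) {γ : Type} [Finite γ] {n : ℕ}
    (φ : Language.graph.BoundedFormula γ n) {xs : γ → V} {ys : Fin n → V} {xs' : γ → W}
    {ys' : Fin n → W} (h : SameAtomicType G H (Sum.elim xs ys) (Sum.elim xs' ys')) :
    @BoundedFormula.Realize _ V G.structure _ _ φ xs ys ↔
      @BoundedFormula.Realize _ W H.structure _ _ φ xs' ys' := by
  let := G.structure
  let := H.structure
  induction φ with
  | falsum => exact Iff.rfl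
  | equal t₁ t₂ =>
    obtain ⟨i, rfl⟩ := exists_eq_var_of_graph_term t₁
    obtain ⟨j, rfl⟩ := exists_eq_var_of_graph_term t₂
    exact (h i j).1
  | rel R ts =>
    cases R
    obtain ⟨i, hi⟩ := exists_eq_var_of_graph_term (ts 0)
    obtain ⟨j, hj⟩ := exists_eq_var_of_graph_term (ts 1)
    change G.Adj ((ts 0).realize _) ((ts 1).realize _) ↔
      H.Adj ((ts 0).realize _) ((ts 1).realize _)
    rw [hi, hj]
    exact (h i j).2
  | imp f₁ f₂ ih₁ ih₂ => exact imp_congr (ih₁ h) (ih₂ h)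
  | @all n f ih =>
    have hcard : #(γ ⊕ Fin n) < ℵ₀ := lt_aleph0_of_finite _
    have hsnoc : ∀ x y, SameAtomicType G H (Option.elim' x (Sum.elim xs ys))
        (Option.elim' y (Sum.elim xs' ys')) →
        (f.Realize xs (Fin.snoc ys x) ↔ f.Realize xs' (Fin.snoc ys' y)) := fun x y hxy =>
      ih (by rw [sum_elim_snoc, sum_elim_snoc]; exact hxy.comp snocIndex)
    refine ⟨fun hf y => ?_, fun hf x => ?_⟩
    · obtain ⟨x, hx⟩ := h.symm.exists_option_elim' hG hcard y
      exact (hsnoc x y hx.symm).1 (hf x)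
    · obtain ⟨y, hy⟩ := h.exists_option_elim' hH hcard x
      exact (hsnoc x y hy).2 (hf y)

theorem SameAtomicType.realize_formula_iff (hG : ExtensionProperty G ℵ₀)
    (hH : ExtensionProperty H ℵ₀) {γ : Type} [Finite γ] (φ : Language.graph.Formula γ)
    {v : γ → V} {w : γ → W} (h : SameAtomicType G H v w) :
    @Formula.Realize _ V G.structure _ φ v ↔ @Formula.Realize _ W H.structure _ φ w :=
  realize_boundedFormula_iff hG hH φ <| by
    rintro (i | i) (j | j)
    exacts [h i j, j.elim0, i.elim0, i.elim0]

end BackAndForth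

section Saturation

variable {V : Type} {G : SimpleGraph V}

theorem ExtensionProperty.exists_eventually_sameAdj {μ : Cardinal} (hG : ExtensionProperty G μ)
    {α : Type} (v : α → V) (hα : #α < μ) {D : Type} (U : Ultrafilter D) (F : D → V) :
    ∃ x, ∀ a, ∀ᶠ t in (U : Filter D),
      (F t = v a ↔ x = v a) ∧ (G.Adj (F t) (v a) ↔ G.Adj x (v a)) := by
  by_cases hconst : ∃ a₀, ∀ᶠ t in (U : Filter D), F t = v a₀
  · obtain ⟨a₀, h⟩ := hconst
    exact ⟨v a₀, fun a => h.mono fun t ht => by rw [ht]; exact ⟨Iff.rfl, Iff.rfl⟩⟩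
  rw [not_exists] at hconst
  obtain ⟨x, hx, hadj⟩ := hG (Set.range v) (mk_range_le.trans_lt hα)
    fun z => ∀ᶠ t in (U : Filter D), G.Adj (F t) z
  refine ⟨x, fun a => ?_⟩
  have hne : ∀ᶠ t in (U : Filter D), F t ≠ v a := Ultrafilter.eventually_not.2 (hconst a)
  have hsame : ∀ᶠ t in (U : Filter D), G.Adj (F t) (v a) ↔ G.Adj x (v a) := by
    rw [hadj _ ⟨a, rfl⟩]
    by_cases h : ∀ᶠ t in (U : Filter D), G.Adj (F t) (v a)
    · exact h.mono fun t ht => iff_of_true ht h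
    · exact (Ultrafilter.eventually_not.2 h).mono fun t ht => iff_of_false ht h
  exact (hne.and hsame).mono fun t ht =>
    ⟨iff_of_false ht.1 fun he => hx ⟨a, he.symm⟩, ht.2⟩

theorem realize_iff_of_sameAdj_on_freeVars (hG : ExtensionProperty G ℵ₀) {α : Type}
    [DecidableEq α] (φ : Language.graph.Formula (α ⊕ Fin 1)) (v : α → V) {x y : V}
    (hxy : ∀ a, Sum.inl a ∈ φ.freeVarFinset →
      (x = v a ↔ y = v a) ∧ (G.Adj x (v a) ↔ G.Adj y (v a))) :
    @Formula.Realize _ V G.structure _ φ (Sum.elim v fun _ => x) ↔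
      @Formula.Realize _ V G.structure _ φ (Sum.elim v fun _ => y) := by
  let := G.structure
  have hs : (φ.freeVarFinset : Set (α ⊕ Fin 1)) ⊆ φ.freeVarFinset := subset_rfl
  have hsame : SameAtomicType G G
      ((Sum.elim v fun _ => x) ∘ (Subtype.val : ↥(φ.freeVarFinset : Set (α ⊕ Fin 1)) → _))
      ((Sum.elim v fun _ => y) ∘ Subtype.val) := by
    rintro ⟨a | _, ha⟩ ⟨b | _, hb⟩
    · exact ⟨Iff.rfl, Iff.rfl⟩
    · exact ⟨eq_comm.trans ((hxy a ha).1.trans eq_comm),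
        (G.adj_comm _ _).trans ((hxy a ha).2.trans (G.adj_comm _ _))⟩
    · exact hxy b hb
    · exact ⟨iff_of_true rfl rfl, iff_of_false (G.loopless.irrefl x) (G.loopless.irrefl y)⟩
  have := hsame.realize_formula_iff hG hG (φ.restrictFreeVar (Set.inclusion hs))
  simpa only [Formula.Realize, BoundedFormula.realize_restrictFreeVar'] using this

theorem isSaturated_of_extensionProperty {μ : Cardinal} (hμ : ℵ₀ ≤ μ)
    (hG : ExtensionProperty G μ) : @IsSaturated Language.graph V G.structure μ := by
  classical
  let := G.structure
  intro α v hα p hp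
  have hF : ∀ s : Finset p, ∃ x : V,
      ∀ φ ∈ s, Formula.Realize (φ : Language.graph.Formula _) (Sum.elim v fun _ => x) := fun s =>
    (hp (s.map (Function.Embedding.subtype _)) (by simp)).imp fun x hx φ hφ =>
      hx _ (Finset.mem_map_of_mem _ hφ)
  choose F hF using hF
  let U : Ultrafilter (Finset p) := .of Filter.atTop
  obtain ⟨x, hx⟩ := hG.exists_eventually_sameAdj v hα U F
  refine ⟨x, fun φ hφ => ?_⟩
  have hmem : ∀ᶠ s in (U : Filter (Finset p)), ⟨φ, hφ⟩ ∈ s :=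
    Ultrafilter.of_le _ ((Filter.eventually_ge_atTop {⟨φ, hφ⟩}).mono fun s hs =>
      Finset.singleton_subset_iff.1 hs)
  have hA : (Sum.inl ⁻¹' (φ.freeVarFinset : Set (α ⊕ Fin 1))).Finite :=
    φ.freeVarFinset.finite_toSet.preimage Sum.inl_injective.injOn
  obtain ⟨s, hφs, hsame⟩ :=
    (hmem.and ((Filter.eventually_all_finite hA).2 fun a _ => hx a)).exists
  exact (realize_iff_of_sameAdj_on_freeVars (hG.mono hμ) φ v hsame).1 (hF s _ hφs)

theorem not_isSaturated_succ_of_forall_exists_not_adj (hG : ExtensionProperty G ℵ₀) {β : Type}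
    (ℓ : β → V) (hℓ : ∀ x, ∃ b, ¬ G.Adj x (ℓ b)) :
    ¬ @IsSaturated Language.graph V G.structure (Order.succ #β) := by
  let := G.structure
  let adjTo : β → Language.graph.Formula (β ⊕ Fin 1) := fun b =>
    Language.adj.formula₂ (Term.var (Sum.inr 0)) (Term.var (Sum.inl b))
  have hadjTo : ∀ b x, (adjTo b).Realize (Sum.elim ℓ fun _ => x) ↔ G.Adj x (ℓ b) :=
    fun _ _ => Iff.rfl
  intro hsat
  obtain ⟨x, hx⟩ := hsat β ℓ (Order.lt_succ _) (Set.range adjTo) fun s hs => by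
    choose g hg using fun φ : s => hs φ.2
    obtain ⟨x, -, hx⟩ := hG (Set.range (ℓ ∘ g)) (Set.finite_range _).lt_aleph0 fun _ => True
    refine ⟨x, fun φ hφ => ?_⟩
    rw [show φ = adjTo (g ⟨φ, hφ⟩) from (hg ⟨φ, hφ⟩).symm, hadjTo]
    exact (hx _ ⟨⟨φ, hφ⟩, rfl⟩).2 trivial
  obtain ⟨b, hb⟩ := hℓ x
  exact hb ((hadjTo b x).1 (hx _ ⟨b, rfl⟩))

theorem model_trg_of_extensionProperty (hG : ExtensionProperty G ℵ₀) :
    @Theory.Model _ V G.structure Trg := by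
  let := G.structure
  refine (Theory.model_iff _).2 fun φ hφ => ?_
  exact (SameAtomicType.realize_formula_iff (G := radoGraph) extensionProperty_radoGraph hG φ
    fun i => isEmptyElim i).1 (mem_completeTheory.1 hφ)

end Saturation

inductive WTree (β : Type) : Type
  | leaf : β → WTree β
  | node : (β → WTree β) → WTree β

namespace WTree

variable {β : Type}

def children : WTree β → Set (WTree β)
  | leaf _ => ∅
  | node f => Set.range f

noncomputable def rank : WTree β → Ordinal.{0}
  | leaf _ => 0
  | node f => ⨆ b, Order.succ (rank (f b))

theorem rank_lt_of_mem_children {s t : WTree β} (h : s ∈ children t) : rank s < rank t := by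
  cases t with
  | leaf _ => exact h.elim
  | node f =>
    obtain ⟨b, rfl⟩ := h
    exact (Order.lt_succ _).trans_le (le_ciSup Ordinal.bddAbove_of_small b)

theorem exists_children_eq {X : Set (WTree β)} (hX : X.Nonempty) (hXβ : #X ≤ #β) :
    ∃ t, children t = X := by
  obtain ⟨e⟩ := hXβ
  have := hX.to_subtype
  refine ⟨node (Subtype.val ∘ Function.invFun e), ?_⟩
  rw [children, Set.range_comp, (Function.invFun_surjective e.injective).range_eq,
    Set.image_univ, Subtype.range_coe]

variable (β) in
def memGraph : SimpleGraph (WTree β) := SimpleGraph.fromRel fun s t => s ∈ children t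

-- The paper's `N`, with the leaves as the pairwise non-adjacent `a_α`.
variable (β) in
def sparse : Set (WTree β) := {t | #{b | (memGraph β).Adj t (leaf b)} < #β}

theorem exists_mem_sparse_adj_iff (hβ : ℵ₀ ≤ #β) {S : Set (WTree β)} (hS : #S < #β)
    (c : WTree β → Prop) :
    ∃ w ∈ sparse β, w ∉ S ∧ ∀ a ∈ S, ((memGraph β).Adj w a ↔ c a) := by
  have hsucc : ∀ {X : Set (WTree β)}, #X ≤ #S + 1 → #X < #β := fun h =>
    h.trans_lt (add_lt_of_lt hβ hS (one_lt_aleph0.trans_le hβ))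
  obtain ⟨b₀⟩ : Nonempty β := (infinite_iff.2 hβ).nonempty
  -- `t₀` lies above `S` in rank; the node `w` with children `t₀` and the wanted neighbours in
  -- `S` then lies above `S` too, so it is new and is not a child of any vertex of `S`.
  obtain ⟨t₀, ht₀⟩ :=
    exists_children_eq (Set.insert_nonempty (leaf b₀) S) (hsucc mk_insert_le).le
  have hSt₀ : ∀ s ∈ S, rank s < rank t₀ := fun s hs =>
    rank_lt_of_mem_children (ht₀ ▸ Set.mem_insert_of_mem _ hs)
  have hX : #(insert t₀ {a ∈ S | c a} : Set (WTree β)) < #β :=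
    hsucc (mk_insert_le.trans (add_le_add_left (mk_le_mk_of_subset (Set.sep_subset _ _)) 1))
  obtain ⟨w, hw⟩ := exists_children_eq (Set.insert_nonempty _ _) hX.le
  have hSw : ∀ s ∈ S, rank s < rank w := fun s hs =>
    (hSt₀ s hs).trans (rank_lt_of_mem_children (hw ▸ Set.mem_insert _ _))
  refine ⟨w, ?_, fun hwS => (hSw w hwS).false, fun a ha => ?_⟩
  · have hleaves : {b | (memGraph β).Adj w (leaf b)} ⊆ leaf ⁻¹' children w := by
      rintro b ⟨-, h | h⟩
      exacts [h.elim, h]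
    rw [hw] at hleaves
    exact (mk_le_mk_of_subset hleaves).trans_lt
      ((mk_preimage_of_injective _ _ fun _ _ => leaf.inj).trans_lt hX)
  · rw [memGraph, SimpleGraph.fromRel_adj, hw]
    constructor
    · rintro ⟨-, h | rfl | ⟨-, hc⟩⟩
      · exact absurd (rank_lt_of_mem_children h) (hSw a ha).not_gt
      · exact ((hSt₀ _ ha).false).elim
      · exact hc
    · exact fun hc => ⟨fun h => (hSw a ha).ne' (congrArg rank h),
        Or.inr (Set.mem_insert_of_mem _ ⟨ha, hc⟩)⟩

theorem extensionProperty_induce_sparse (hβ : ℵ₀ ≤ #β) :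
    ExtensionProperty ((memGraph β).induce (sparse β)) #β := by
  intro S hS c
  obtain ⟨w, hw, hwS, hadj⟩ := exists_mem_sparse_adj_iff hβ (mk_image_le.trans_lt hS)
    fun z => ∃ h : z ∈ sparse β, c ⟨z, h⟩
  exact ⟨⟨w, hw⟩, fun h => hwS ⟨_, h, rfl⟩, fun a ha =>
    (hadj a ⟨a, ha, rfl⟩).trans ⟨fun ⟨_, h⟩ => h, fun h => ⟨a.2, h⟩⟩⟩

theorem leaf_mem_sparse (b : β) : leaf b ∈ sparse β := by
  have : {b' | (memGraph β).Adj (leaf b) (leaf b')} = ∅ := by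
    ext b'
    simp [memGraph, children]
  simpa [sparse, this] using pos_iff_ne_zero.2 (mk_ne_zero_iff.2 ⟨b⟩)

theorem exists_not_adj_leaf {t : WTree β} (ht : t ∈ sparse β) :
    ∃ b, ¬ (memGraph β).Adj t (leaf b) := by
  by_contra! h
  simp [sparse, h] at ht

end WTree

/-- If `κ > cf(κ) + ℵ₀`, then the theory of the random graph has a
model which is `κ`-saturated but not `κ⁺`-saturated. -/
theorem statement3 (κ : Cardinal) (hκ : κ.ord.cof + Cardinal.aleph0 < κ) :
    ∃ (N : Type) (inst : Language.graph.Structure N),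
      letI := inst
      (N ⊨ Trg) ∧ IsSaturated Language.graph N κ ∧
        ¬ IsSaturated Language.graph N (Order.succ κ) := by
  obtain ⟨β, rfl⟩ : ∃ β : Type, #β = κ := ⟨κ.out, mk_out κ⟩
  have hβ : ℵ₀ ≤ #β := le_add_self.trans hκ.le
  have hG := WTree.extensionProperty_induce_sparse hβ
  exact ⟨WTree.sparse β, ((WTree.memGraph β).induce (WTree.sparse β)).structure,
    model_trg_of_extensionProperty (hG.mono hβ), isSaturated_of_extensionProperty hβ hG,
    not_isSaturated_succ_of_forall_exists_not_adj (hG.mono hβ)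
      (fun b => ⟨_, WTree.leaf_mem_sparse b⟩) fun t => WTree.exists_not_adj_leaf t.2⟩

end Paper
end

section
/- Let N be a model of bounded Peano arithmetic and let D₁ be a reasonable initial segment of N (for each x ∈ N and d ∈ D₁, x^d exists in N). Then the closure D₂ = {a ∈ N : ∃ d ∈ D₁ and standard n with a < dⁿ} is also reasonable: for every x ∈ N and every d₂ ∈ D₂, x^{d₂} exists in N. -/
open FirstOrder Language Cardinal

namespace Paper

/-- Function symbols of the language of arithmetic: `0, 1` (arity 0) and `+, *` (arity 2). -/
def arithFunc : ℕ → Type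
  | 0 => Fin 2
  | 2 => Fin 2
  | _ => Empty

/-- Relation symbols of the language of arithmetic: `<` (arity 2). -/
def arithRel : ℕ → Type
  | 2 => Unit
  | _ => Empty

/-- The first-order language of arithmetic `{0, 1, +, *, <}`. -/
def Larith : FirstOrder.Language := ⟨arithFunc, arithRel⟩

section Ops

variable (M : Type) [Larith.Structure M]

/-- The interpretation of `0`. -/
def azero : M := Structure.funMap (L := Larith) (M := M) (n := 0) ((0 : Fin 2) : arithFunc 0) ![]

/-- The interpretation of `1`. -/
def aone : M := Structure.funMap (L := Larith) (M := M) (n := 0) ((1 : Fin 2) : arithFunc 0) ![]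

variable {M}

/-- The interpretation of `+`. -/
def aadd (x y : M) : M :=
  Structure.funMap (L := Larith) (M := M) (n := 2) ((0 : Fin 2) : arithFunc 2) ![x, y]

/-- The interpretation of `*`. -/
def amul (x y : M) : M :=
  Structure.funMap (L := Larith) (M := M) (n := 2) ((1 : Fin 2) : arithFunc 2) ![x, y]

/-- The interpretation of `<`. -/
def alt (x y : M) : Prop :=
  Structure.RelMap (L := Larith) (M := M) (n := 2) ((() : Unit) : arithRel 2) ![x, y]

/-- The standard numerals of `M`. -/
def ofNat (M : Type) [Larith.Structure M] : ℕ → M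
  | 0 => azero M
  | n + 1 => aadd (ofNat M n) (aone M)

end Ops

/-- `Δ₀` (bounded) formulas of arithmetic: built from atomic formulas by boolean
connectives and bounded quantification `∀ x < t`. -/
inductive IsDelta0 {α : Type} : ∀ {n : ℕ}, Larith.BoundedFormula α n → Prop
  | falsum {n} : IsDelta0 (BoundedFormula.falsum : Larith.BoundedFormula α n)
  | equal {n} (t u : Larith.Term (α ⊕ Fin n)) : IsDelta0 (t.bdEqual u)
  | rel {n l} (R : Larith.Relations l) (ts : Fin l → Larith.Term (α ⊕ Fin n)) :
      IsDelta0 (BoundedFormula.rel R ts)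
  | imp {n} {φ ψ : Larith.BoundedFormula α n} :
      IsDelta0 φ → IsDelta0 ψ → IsDelta0 (φ.imp ψ)
  | ball {n} (t : Larith.Term (α ⊕ Fin n)) {φ : Larith.BoundedFormula α (n + 1)} :
      IsDelta0 φ →
      IsDelta0 ((((show Larith.Relations 2 from ()).boundedFormula₂
        (Term.var (Sum.inr (Fin.last n)))
        (t.relabel (Sum.map id Fin.castSucc))).imp φ).all)

/-- A subset of `M^k` definable by a `Δ₀` formula with parameters. -/
def Delta0DefinableRel (M : Type) [Larith.Structure M] (k : ℕ) (S : Set (Fin k → M)) : Prop :=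
  ∃ (p : ℕ) (φ : Larith.BoundedFormula (Fin p) k) (v : Fin p → M),
    IsDelta0 φ ∧ S = {x | φ.Realize v x}

/-- `M` is a model of bounded Peano arithmetic `I∆₀`: the basic axioms of a discretely
ordered commutative semiring together with induction for `Δ₀`-definable sets. -/
structure IsBPAModel (M : Type) [Larith.Structure M] : Prop where
  add_assoc : ∀ x y z : M, aadd (aadd x y) z = aadd x (aadd y z)
  add_comm : ∀ x y : M, aadd x y = aadd y x
  add_zero : ∀ x : M, aadd x (azero M) = x
  mul_assoc : ∀ x y z : M, amul (amul x y) z = amul x (amul y z)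
  mul_comm : ∀ x y : M, amul x y = amul y x
  mul_one : ∀ x : M, amul x (aone M) = x
  mul_zero : ∀ x : M, amul x (azero M) = azero M
  distrib : ∀ x y z : M, amul x (aadd y z) = aadd (amul x y) (amul x z)
  lt_irrefl : ∀ x : M, ¬ alt x x
  lt_trans : ∀ x y z : M, alt x y → alt y z → alt x z
  lt_total : ∀ x y : M, alt x y ∨ x = y ∨ alt y x
  add_lt_add : ∀ x y z : M, alt x y → alt (aadd x z) (aadd y z)
  mul_lt_mul : ∀ x y z : M, alt (azero M) z → alt x y → alt (amul x z) (amul y z)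
  zero_lt_one : alt (azero M) (aone M)
  zero_le : ∀ x : M, x = azero M ∨ alt (azero M) x
  lt_iff_add : ∀ x y : M, alt x y ↔ ∃ z : M, y = aadd x (aadd z (aone M))
  induction : ∀ S : Set M,
    Delta0DefinableRel M 1 {x : Fin 1 → M | x 0 ∈ S} →
    azero M ∈ S → (∀ x ∈ S, aadd x (aone M) ∈ S) → ∀ x : M, x ∈ S

/-- A `Δ₀`-definable relation `E x y z`, read `x ^ y = z`, with all the usual
properties of the graph of exponentiation except possibly totality
(Gaifman–Dimitracopoulos). -/
structure ExpGraph (M : Type) [Larith.Structure M] (E : M → M → M → Prop) : Prop where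
  definable : ∃ (p : ℕ) (φ : Larith.BoundedFormula (Fin p) 3) (v : Fin p → M),
    IsDelta0 φ ∧ ∀ x y z : M, (E x y z ↔ φ.Realize v ![x, y, z])
  exp_zero : ∀ x : M, E x (azero M) (aone M)
  exp_succ : ∀ x y z : M, E x y z → E x (aadd y (aone M)) (amul z x)
  exp_unique : ∀ x y z z' : M, E x y z → E x y z' → z = z'
  exp_dcl : ∀ x y z : M, E x y z → ∀ y' : M, alt y' y → ∃ z' : M, E x y' z'

/-- Standard (externally finite) powers `d ^ n` in `M`. -/
def stdPow {M : Type} [Larith.Structure M] (d : M) : ℕ → M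
  | 0 => aone M
  | n + 1 => amul (stdPow d n) d


/-!
As `d₂ < dⁿ` and the exponents of an existing power are downward closed, it suffices that
`x ^ dⁿ = (⋯((x ^ d) ^ d)⋯) ^ d` exists, which follows from `x ^ (a * d) = (x ^ a) ^ d`. This law
and `x ^ (c + a) = x ^ c * x ^ a` are proved by `Δ₀`-induction on the exponent `b`, with the
intermediate powers bounded by the final one plus one: for a positive base `w ≤ w * x`, so the
bound on `w * x = x ^ (b + 1)` passes down to `w = x ^ b`. The base `0` is handled separately.
-/

open BoundedFormula

section Substitution

variable {α β : Type}

def liftSubst {n m : ℕ} (f : α ⊕ Fin n → Larith.Term (β ⊕ Fin m)) :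
    α ⊕ Fin (n + 1) → Larith.Term (β ⊕ Fin (m + 1))
  | .inl a => (f (.inl a)).relabel (Sum.map id Fin.castSucc)
  | .inr i =>
    if h : i = Fin.last n then Term.var (.inr (Fin.last m))
    else (f (.inr (i.castPred h))).relabel (Sum.map id Fin.castSucc)

def substAll : ∀ {n m : ℕ}, Larith.BoundedFormula α n →
    (α ⊕ Fin n → Larith.Term (β ⊕ Fin m)) → Larith.BoundedFormula β m
  | _, _, .falsum, _ => .falsum
  | _, _, .equal t u, f => (t.subst f).bdEqual (u.subst f)
  | _, _, .rel R ts, f => .rel R fun i => (ts i).subst f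
  | _, _, .imp φ ψ, f => (substAll φ f).imp (substAll ψ f)
  | _, _, .all φ, f => (substAll φ (liftSubst f)).all

theorem liftSubst_last {n m : ℕ} (f : α ⊕ Fin n → Larith.Term (β ⊕ Fin m)) :
    liftSubst f (.inr (Fin.last n)) = Term.var (.inr (Fin.last m)) := by
  simp [liftSubst]

theorem liftSubst_castSucc {n m : ℕ} (f : α ⊕ Fin n → Larith.Term (β ⊕ Fin m)) (i : Fin n) :
    liftSubst f (.inr i.castSucc) = (f (.inr i)).relabel (Sum.map id Fin.castSucc) := by
  simp [liftSubst, (Fin.castSucc_lt_last i).ne]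

theorem subst_liftSubst_relabel_castSucc {n m : ℕ} (f : α ⊕ Fin n → Larith.Term (β ⊕ Fin m))
    (t : Larith.Term (α ⊕ Fin n)) :
    (t.relabel (Sum.map id Fin.castSucc)).subst (liftSubst f) =
      (t.subst f).relabel (Sum.map id Fin.castSucc) := by
  induction t with
  | var s =>
    cases s with
    | inl a => rfl
    | inr i => exact liftSubst_castSucc f i
  | func g ts ih =>
    simp only [Term.relabel, Term.subst]
    congr 1
    funext i
    exact ih i

theorem IsDelta0.substAll {n : ℕ} {φ : Larith.BoundedFormula α n} (h : IsDelta0 φ) :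
    ∀ {m : ℕ} (f : α ⊕ Fin n → Larith.Term (β ⊕ Fin m)), IsDelta0 (substAll φ f) := by
  induction h with
  | falsum => exact fun _ => .falsum
  | equal t u => exact fun _ => .equal _ _
  | rel R ts => exact fun _ => .rel _ _
  | imp _ _ ih₁ ih₂ => exact fun f => .imp (ih₁ f) (ih₂ f)
  | @ball k t φ _ ih =>
    intro m f
    have hguard : Paper.substAll ((show Larith.Relations 2 from ()).boundedFormula₂
        (Term.var (Sum.inr (Fin.last k))) (t.relabel (Sum.map id Fin.castSucc))) (liftSubst f) =
        (show Larith.Relations 2 from ()).boundedFormula₂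
          (Term.var (Sum.inr (Fin.last m))) ((t.subst f).relabel (Sum.map id Fin.castSucc)) := by
      show BoundedFormula.rel _ _ = BoundedFormula.rel _ _
      congr 1
      funext i
      fin_cases i
      · exact liftSubst_last f
      · exact subst_liftSubst_relabel_castSucc f t
    change IsDelta0 ((Paper.substAll _ (liftSubst f)).imp (Paper.substAll φ (liftSubst f))).all
    rw [hguard]
    exact .ball (t.subst f) (ih (liftSubst f))

variable {M : Type} [Larith.Structure M]

theorem realize_relabel_castSucc_snoc {m : ℕ} (t : Larith.Term (β ⊕ Fin m)) (v : β → M)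
    (xs : Fin m → M) (a : M) :
    (t.relabel (Sum.map id Fin.castSucc)).realize (Sum.elim v (Fin.snoc xs a)) =
      t.realize (Sum.elim v xs) := by
  rw [Term.realize_relabel]
  congr 1
  funext s
  cases s <;> simp

theorem realize_substAll : ∀ {n m : ℕ} (φ : Larith.BoundedFormula α n)
    (f : α ⊕ Fin n → Larith.Term (β ⊕ Fin m)) (v : β → M) (xs : Fin m → M),
    (substAll φ f).Realize v xs ↔
      φ.Realize (fun a => (f (.inl a)).realize (Sum.elim v xs))
        (fun i => (f (.inr i)).realize (Sum.elim v xs))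
  | _, _, .falsum, _, _, _ => Iff.rfl
  | _, _, .equal t u, f, v, xs => by
    simp only [substAll, BoundedFormula.Realize, realize_bdEqual, Term.realize_subst,
      ← Function.comp_def, ← Function.comp_assoc, Sum.elim_comp_inl_inr]
  | _, _, .rel R ts, f, v, xs => by
    simp only [substAll, BoundedFormula.Realize, Term.realize_subst, ← Function.comp_def,
      ← Function.comp_assoc, Sum.elim_comp_inl_inr]
  | _, _, .imp φ ψ, f, v, xs => by
    simp only [substAll, realize_imp, realize_substAll φ, realize_substAll ψ]
  | n, _, .all φ, f, v, xs => by
    simp only [substAll, realize_all, realize_substAll φ]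
    refine forall_congr' fun a => iff_of_eq (congrArg₂ _ ?_ ?_)
    · funext b
      exact realize_relabel_castSucc_snoc _ v xs a
    · funext i
      refine Fin.lastCases ?_ (fun j => ?_) i
      · simp [liftSubst_last]
      · rw [liftSubst_castSucc, realize_relabel_castSucc_snoc, Fin.snoc_castSucc]

end Substitution

section Definability

variable {M : Type} [Larith.Structure M] {k : ℕ}

/-- Polynomial functions with coefficients in `M`, the coefficients being the parameters. -/
def TermDefinable (M : Type) [Larith.Structure M] (k : ℕ) (f : (Fin k → M) → M) : Prop :=
  ∃ (p : ℕ) (t : Larith.Term (Fin p ⊕ Fin k)) (v : Fin p → M),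
    ∀ xs, f xs = t.realize (Sum.elim v xs)

theorem realize_relabel_sumMap_id {α β : Type} (t : Larith.Term (α ⊕ Fin k)) (e : α → β)
    (w : β → M) (xs : Fin k → M) :
    (t.relabel (Sum.map e id)).realize (Sum.elim w xs) = t.realize (Sum.elim (w ∘ e) xs) := by
  rw [Term.realize_relabel, Sum.elim_comp_map, Function.comp_id]

namespace TermDefinable

theorem var (i : Fin k) : TermDefinable M k fun xs => xs i :=
  ⟨0, Term.var (.inr i), Fin.elim0, fun _ => rfl⟩

theorem const (c : M) : TermDefinable M k fun _ => c :=
  ⟨1, Term.var (.inl 0), ![c], fun _ => rfl⟩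

theorem exists_common_params : ∀ {m : ℕ} {F : Fin m → (Fin k → M) → M},
    (∀ j, TermDefinable M k (F j)) → ∃ (p : ℕ) (t : Fin m → Larith.Term (Fin p ⊕ Fin k))
      (v : Fin p → M), ∀ j xs, F j xs = (t j).realize (Sum.elim v xs)
  | 0, _, _ => ⟨0, Fin.elim0, Fin.elim0, fun j => j.elim0⟩
  | _ + 1, F, hF => by
    obtain ⟨p, t, v, ht⟩ := hF 0
    obtain ⟨q, ts, w, hts⟩ := exists_common_params fun j => hF j.succ
    refine ⟨p + q, Fin.cons (t.relabel (Sum.map (Fin.castAdd q) id))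
      fun j => (ts j).relabel (Sum.map (Fin.natAdd p) id), Fin.append v w, fun j xs => ?_⟩
    refine Fin.cases ?_ (fun j => ?_) j
    · simp only [Fin.cons_zero, realize_relabel_sumMap_id, ht]
      congr; funext i; simp
    · simp only [Fin.cons_succ, realize_relabel_sumMap_id, hts]
      congr; funext i; simp

theorem func₂ {f g : (Fin k → M) → M} (s : Larith.Functions 2) (hf : TermDefinable M k f)
    (hg : TermDefinable M k g) :
    TermDefinable M k fun xs => Structure.funMap (L := Larith) s ![f xs, g xs] := by
  obtain ⟨p, t, v, ht⟩ := exists_common_params (F := ![f, g]) (Fin.forall_fin_two.2 ⟨hf, hg⟩)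
  refine ⟨p, Functions.apply₂ s (t 0) (t 1), v, fun xs => ?_⟩
  rw [Term.realize_functions_apply₂, ← ht 0, ← ht 1]
  rfl

theorem add {f g : (Fin k → M) → M} (hf : TermDefinable M k f) (hg : TermDefinable M k g) :
    TermDefinable M k fun xs => aadd (f xs) (g xs) :=
  func₂ ((0 : Fin 2) : arithFunc 2) hf hg

theorem mul {f g : (Fin k → M) → M} (hf : TermDefinable M k f) (hg : TermDefinable M k g) :
    TermDefinable M k fun xs => amul (f xs) (g xs) :=
  func₂ ((1 : Fin 2) : arithFunc 2) hf hg

end TermDefinable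

def renameParams {α β : Type} {n : ℕ} (e : α → β) (φ : Larith.BoundedFormula α n) :
    Larith.BoundedFormula β n :=
  substAll φ (Sum.elim (fun a => Term.var (.inl (e a))) fun i => Term.var (.inr i))

theorem realize_renameParams {α β : Type} {n : ℕ} (e : α → β) (φ : Larith.BoundedFormula α n)
    (w : β → M) (xs : Fin n → M) : (renameParams e φ).Realize w xs ↔ φ.Realize (w ∘ e) xs :=
  realize_substAll _ _ _ _

theorem IsDelta0.renameParams {α β : Type} {n : ℕ} {φ : Larith.BoundedFormula α n}
    (h : IsDelta0 φ) (e : α → β) : IsDelta0 (renameParams e φ) :=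
  h.substAll _

namespace Delta0DefinableRel

theorem of_realize {p : ℕ} {P : (Fin k → M) → Prop} (φ : Larith.BoundedFormula (Fin p) k)
    (v : Fin p → M) (hφ : IsDelta0 φ) (h : ∀ xs, P xs ↔ φ.Realize v xs) :
    Delta0DefinableRel M k {xs | P xs} :=
  ⟨p, φ, v, hφ, Set.ext h⟩

theorem not {P : (Fin k → M) → Prop} (hP : Delta0DefinableRel M k {xs | P xs}) :
    Delta0DefinableRel M k {xs | ¬ P xs} := by
  obtain ⟨p, φ, v, hφ, hφP⟩ := hP
  exact of_realize φ.not v (hφ.imp .falsum) fun xs => (Set.ext_iff.1 hφP xs).not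

theorem imp {P Q : (Fin k → M) → Prop} (hP : Delta0DefinableRel M k {xs | P xs})
    (hQ : Delta0DefinableRel M k {xs | Q xs}) : Delta0DefinableRel M k {xs | P xs → Q xs} := by
  obtain ⟨p, φ, v, hφ, hφP⟩ := hP
  obtain ⟨q, ψ, w, hψ, hψQ⟩ := hQ
  refine of_realize ((renameParams (Fin.castAdd q) φ).imp (renameParams (Fin.natAdd p) ψ))
    (Fin.append v w) ((hφ.renameParams _).imp (hψ.renameParams _)) fun xs => ?_
  simp only [realize_imp, realize_renameParams, Function.comp_def, Fin.append_left,
    Fin.append_right]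
  exact imp_congr (Set.ext_iff.1 hφP xs) (Set.ext_iff.1 hψQ xs)

theorem ball {Q : (Fin k → M) → M → Prop} {f : (Fin k → M) → M}
    (hQ : Delta0DefinableRel M (k + 1) {ys | Q (Fin.init ys) (ys (Fin.last k))})
    (hf : TermDefinable M k f) : Delta0DefinableRel M k {xs | ∀ a, alt a (f xs) → Q xs a} := by
  obtain ⟨p, φ, v, hφ, hφQ⟩ := hQ
  obtain ⟨q, t, w, ht⟩ := hf
  refine of_realize _ (Fin.append v w)
    (.ball (t.relabel (Sum.map (Fin.natAdd p) id)) (hφ.renameParams (Fin.castAdd q))) fun xs => ?_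
  rw [realize_all]
  refine forall_congr' fun a => ?_
  rw [realize_imp, realize_rel₂, realize_renameParams]
  refine imp_congr ?_ ?_
  · rw [realize_relabel_castSucc_snoc, realize_relabel_sumMap_id, ht]
    simp only [Term.realize_var, Sum.elim_inr, Fin.snoc_last, Function.comp_def, Fin.append_right]
    rfl
  · simpa only [Set.mem_ofPred_eq, Fin.init_snoc, Fin.snoc_last, Function.comp_def,
      Fin.append_left]
      using Set.ext_iff.1 hφQ (Fin.snoc xs a)

theorem preimage {m : ℕ} {S : Set (Fin m → M)} (hS : Delta0DefinableRel M m S)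
    {F : Fin m → (Fin k → M) → M} (hF : ∀ j, TermDefinable M k (F j)) :
    Delta0DefinableRel M k {xs | (fun j => F j xs) ∈ S} := by
  obtain ⟨p, φ, v, hφ, rfl⟩ := hS
  obtain ⟨q, t, w, ht⟩ := TermDefinable.exists_common_params hF
  refine of_realize (substAll φ (Sum.elim (fun i => Term.var (.inl (Fin.castAdd q i)))
    fun j => (t j).relabel (Sum.map (Fin.natAdd p) id))) (Fin.append v w) (hφ.substAll _)
    fun xs => ?_
  simp only [realize_substAll, Sum.elim_inl, Sum.elim_inr, Term.realize_var, Fin.append_left,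
    realize_relabel_sumMap_id, Function.comp_def, Fin.append_right, ← ht, Set.mem_ofPred_eq]

end Delta0DefinableRel

theorem ExpGraph.delta0DefinableRel_comp {E : M → M → M → Prop} (hE : ExpGraph M E)
    {f g h : (Fin k → M) → M} (hf : TermDefinable M k f) (hg : TermDefinable M k g)
    (hh : TermDefinable M k h) : Delta0DefinableRel M k {xs | E (f xs) (g xs) (h xs)} := by
  obtain ⟨p, φ, v, hφ, hφE⟩ := hE.definable
  have hgraph : Delta0DefinableRel M 3 {ys | E (ys 0) (ys 1) (ys 2)} :=
    Delta0DefinableRel.of_realize φ v hφ fun ys =>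
      (hφE _ _ _).trans (iff_of_eq (congrArg _ (FinVec.etaExpand_eq ys)))
  exact hgraph.preimage (F := ![f, g, h]) (by simp [Fin.forall_fin_succ, hf, hg, hh])

end Definability

namespace IsBPAModel

variable {M : Type} [Larith.Structure M] (hB : IsBPAModel M)
include hB

theorem zero_add (x : M) : aadd (azero M) x = x := by
  rw [hB.add_comm, hB.add_zero]

theorem one_mul (x : M) : amul (aone M) x = x := by
  rw [hB.mul_comm, hB.mul_one]

theorem one_ne_zero : aone M ≠ azero M := fun h =>
  hB.lt_irrefl _ (h ▸ hB.zero_lt_one)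

theorem lt_succ_self (x : M) : alt x (aadd x (aone M)) :=
  (hB.lt_iff_add _ _).2 ⟨azero M, by rw [hB.zero_add]⟩

theorem exists_eq_succ_of_pos {x : M} (hx : alt (azero M) x) : ∃ y, x = aadd y (aone M) := by
  obtain ⟨y, rfl⟩ := (hB.lt_iff_add _ _).1 hx
  exact ⟨y, hB.zero_add _⟩

theorem mul_pos {x y : M} (hx : alt (azero M) x) (hy : alt (azero M) y) :
    alt (azero M) (amul x y) := by
  simpa only [hB.mul_comm (azero M), hB.mul_zero] using hB.mul_lt_mul _ _ _ hy hx

theorem lt_of_mul_lt {w x b : M} (hx : alt (azero M) x) (h : alt (amul w x) b) : alt w b := by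
  obtain ⟨y, rfl⟩ := hB.exists_eq_succ_of_pos hx
  rw [hB.distrib, hB.mul_one] at h
  rcases hB.zero_le (amul w y) with hwy | hwy
  · rwa [hwy, hB.zero_add] at h
  · obtain ⟨z, hz⟩ := hB.exists_eq_succ_of_pos hwy
    refine hB.lt_trans _ _ _ ((hB.lt_iff_add _ _).2 ⟨z, ?_⟩) h
    rw [hz, hB.add_comm]

end IsBPAModel

namespace ExpGraph

variable {M : Type} [Larith.Structure M] {E : M → M → M → Prop}
  (hE : ExpGraph M E) (hB : IsBPAModel M)
include hE hB

theorem exp_one (x : M) : E x (aone M) x := by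
  simpa only [hB.zero_add, hB.one_mul] using hE.exp_succ _ _ _ (hE.exp_zero x)

theorem zero_exp_succ : ∀ y : M, E (azero M) (aadd y (aone M)) (azero M) := by
  refine hB.induction {y | E (azero M) (aadd y (aone M)) (azero M)}
    (hE.delta0DefinableRel_comp (.const _) ((TermDefinable.var 0).add (.const _)) (.const _))
    ?_ fun y hy => ?_
  · have h₁ := hE.exp_succ _ _ _ (hE.exp_zero (azero M))
    rwa [hB.mul_zero] at h₁
  · have h₂ := hE.exp_succ _ _ _ hy
    rwa [hB.mul_zero] at h₂

theorem exists_zero_exp (y : M) : ∃ z, E (azero M) y z := by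
  rcases hB.zero_le y with rfl | hy
  · exact ⟨_, hE.exp_zero _⟩
  · obtain ⟨y, rfl⟩ := hB.exists_eq_succ_of_pos hy
    exact ⟨_, hE.zero_exp_succ hB y⟩

theorem exp_pos {x y z : M} (hx : alt (azero M) x) (h : E x y z) : alt (azero M) z := by
  have hne : ∀ y, ¬ E x y (azero M) := by
    refine hB.induction {y | ¬ E x y (azero M)}
      (hE.delta0DefinableRel_comp (.const x) (.var 0) (.const _)).not
      (fun h0 => hB.one_ne_zero (hE.exp_unique _ _ _ _ (hE.exp_zero x) h0)) fun y hy hy' => ?_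
    obtain ⟨z, hz⟩ := hE.exp_dcl _ _ _ hy' y (hB.lt_succ_self y)
    have hzx : azero M = amul z x := hE.exp_unique _ _ _ _ hy' (hE.exp_succ _ _ _ hz)
    rcases hB.zero_le z with rfl | hz0
    · exact hy hz
    · exact hB.lt_irrefl _ (hzx ▸ hB.mul_pos hz0 hx)
  rcases hB.zero_le z with rfl | hz
  · exact absurd h (hne y)
  · exact hz

theorem exp_add {x c u a W : M} (hx : alt (azero M) x) (hc : E x c u) (ha : E x a W) :
    E x (aadd c a) (amul u W) := by
  have key : ∀ b w, alt w (aadd W (aone M)) → E x b w → E x (aadd c b) (amul u w) := by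
    refine hB.induction
      {b | ∀ w, alt w (aadd W (aone M)) → E x b w → E x (aadd c b) (amul u w)} ?_ ?_ ?_
    · exact Delta0DefinableRel.ball
        ((hE.delta0DefinableRel_comp (.const x) (.var 0) (.var 1)).imp
          (hE.delta0DefinableRel_comp (.const x) ((TermDefinable.const c).add (.var 0))
            ((TermDefinable.const u).mul (.var 1)))) (.const _)
    · intro w _ hw
      rw [hE.exp_unique _ _ _ _ hw (hE.exp_zero x), hB.add_zero, hB.mul_one]
      exact hc
    · intro b ih w' hw' hbw'
      obtain ⟨w, hw⟩ := hE.exp_dcl _ _ _ hbw' b (hB.lt_succ_self b)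
      obtain rfl : w' = amul w x := hE.exp_unique _ _ _ _ hbw' (hE.exp_succ _ _ _ hw)
      have := hE.exp_succ _ _ _ (ih w (hB.lt_of_mul_lt hx hw') hw)
      rwa [hB.add_assoc, hB.mul_assoc] at this
  exact key a W (hB.lt_succ_self W) ha

theorem exp_mul {x a W d U : M} (hx : alt (azero M) x) (ha : E x a W) (hd : E W d U) :
    E x (amul a d) U := by
  have hW : alt (azero M) W := hE.exp_pos hB hx ha
  have key : ∀ b u, alt u (aadd U (aone M)) → E W b u → E x (amul a b) u := by
    refine hB.induction {b | ∀ u, alt u (aadd U (aone M)) → E W b u → E x (amul a b) u} ?_ ?_ ?_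
    · exact Delta0DefinableRel.ball
        ((hE.delta0DefinableRel_comp (.const W) (.var 0) (.var 1)).imp
          (hE.delta0DefinableRel_comp (.const x) ((TermDefinable.const a).mul (.var 0))
            (.var 1))) (.const _)
    · intro u _ hu
      rw [hE.exp_unique _ _ _ _ hu (hE.exp_zero W), hB.mul_zero]
      exact hE.exp_zero x
    · intro b ih u' hu' hbu'
      obtain ⟨u, hu⟩ := hE.exp_dcl _ _ _ hbu' b (hB.lt_succ_self b)
      obtain rfl : u' = amul u W := hE.exp_unique _ _ _ _ hbu' (hE.exp_succ _ _ _ hu)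
      rw [hB.distrib, hB.mul_one]
      exact hE.exp_add hB hx (ih u (hB.lt_of_mul_lt hW hu') hu) ha
  exact key d U (hB.lt_succ_self U) hd

theorem exists_exp_stdPow {d : M} (hd : ∀ w, ∃ z, E w d z) (x : M) (n : ℕ) :
    ∃ z, E x (stdPow d n) z := by
  rcases hB.zero_le x with rfl | hx
  · exact hE.exists_zero_exp hB _
  induction n with
  | zero => exact ⟨x, hE.exp_one hB x⟩
  | succ n ih =>
    obtain ⟨W, hW⟩ := ih
    obtain ⟨U, hU⟩ := hd W
    exact ⟨U, hE.exp_mul hB hx hW hU⟩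

end ExpGraph

theorem statement10_general (M : Type) [Larith.Structure M] (hB : IsBPAModel M)
    (E : M → M → M → Prop) (hE : ExpGraph M E)
    (D₁ : Set M)
    (hreas : ∀ x : M, ∀ d ∈ D₁, ∃ z : M, E x d z) :
    ∀ x : M, ∀ d₂ ∈ {a : M | ∃ d ∈ D₁, ∃ n : ℕ, alt a (stdPow d n)},
      ∃ z : M, E x d₂ z := by
  rintro x d₂ ⟨d, hd, n, hlt⟩
  obtain ⟨z, hz⟩ := hE.exists_exp_stdPow hB (fun w => hreas w d hd) x n
  exact hE.exp_dcl x _ z hz d₂ hlt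

/-- Let `N ⊨ I∆₀` and let `D₁` be a reasonable initial segment of `N`
(for all `x ∈ N`, `d ∈ D₁`, `x ^ d` exists). Then the closure
`D₂ = {a : ∃ d ∈ D₁, ∃ standard n, a < dⁿ}` is also reasonable. -/
theorem statement10 (M : Type) [Larith.Structure M] (hB : IsBPAModel M)
    (E : M → M → M → Prop) (hE : ExpGraph M E)
    (D₁ : Set M) (hinit : ∀ x ∈ D₁, ∀ y : M, alt y x → y ∈ D₁)
    (hreas : ∀ x : M, ∀ d ∈ D₁, ∃ z : M, E x d z) :
    ∀ x : M, ∀ d₂ ∈ {a : M | ∃ d ∈ D₁, ∃ n : ℕ, alt a (stdPow d n)},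
      ∃ z : M, E x d₂ z :=
  statement10_general M hB E hE D₁ hreas

end Paper
end

section
/- Let X be a pseudofinite discrete linear order (in a model M, every nonempty M-definable bounded subset of X has least and greatest elements), and let ℱ be the family of all elements x of the definable tree over X such that x is a definable one-to-one order-preserving function from an initial segment of X onto an initial segment of a definable pseudofinite linear order W*. Then ℱ is linearly ordered by the initial-segment relation: for any x, x' ∈ ℱ, either x ⊴ x' or x' ⊴ x. -/
/-!
Two order-isomorphisms `s`, `t` from initial segments of `X` onto initial segments of `W` agree
on their common domain: at the first point `m` where they might differ, say `t m < s m`, the value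
`t m` lies in the initial segment `s` maps onto below `s m`, so it equals `s y = t y` for some
`y < m`, contradicting `t y < t m`. Pseudofiniteness makes `X` well-founded, so the argument is
a well-founded induction.
-/

namespace Paper

/-- A node of the tree over the order `X` with length bound `d` and values in `W`:
a function from the initial segment `[0, lg)` of `X` to `W`, with `lg ≤ d`. -/
structure PFnW (X W : Type) [LinearOrder X] [LinearOrder W] (d : X) where
  lg : X
  lg_le : lg ≤ d
  val : ∀ x : X, x < lg → W

/-- The (weak) initial-segment order on such nodes. -/
def PFnW.le {X W : Type} [LinearOrder X] [LinearOrder W] {d : X} (s t : PFnW X W d) : Prop :=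
  ∃ h : s.lg ≤ t.lg, ∀ (x : X) (hx : x < s.lg), t.val x (lt_of_lt_of_le hx h) = s.val x hx

theorem wellFoundedLT_of_forall_exists_min {X : Type} [Preorder X]
    (h : ∀ S : Set X, S.Nonempty → ∃ m ∈ S, ∀ x ∈ S, m ≤ x) : WellFoundedLT X :=
  ⟨WellFounded.wellFounded_iff_has_min.2 fun S hS =>
    let ⟨m, hmS, hm⟩ := h S hS
    ⟨m, hmS, fun x hx => (hm x hx).not_gt⟩⟩

namespace PFnW

variable {X W : Type} [LinearOrder X] [LinearOrder W] {d : X}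

def IsStrictMono (s : PFnW X W d) : Prop :=
  ∀ (x y : X) (hx : x < s.lg) (hy : y < s.lg), x < y → s.val x hx < s.val y hy

def IsInitialIso (s : PFnW X W d) : Prop :=
  s.IsStrictMono ∧
    ∀ w w' : W, (∃ x hx, s.val x hx = w) → w' ≤ w → ∃ x hx, s.val x hx = w'

theorem IsInitialIso.exists_lt_of_lt_val {s : PFnW X W d} (hs : s.IsInitialIso) {m : X}
    (hm : m < s.lg) {w : W} (hw : w < s.val m hm) :
    ∃ x, ∃ hx : x < s.lg, x < m ∧ s.val x hx = w := by
  obtain ⟨x, hx, rfl⟩ := hs.2 (s.val m hm) w ⟨m, hm, rfl⟩ hw.le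
  refine ⟨x, hx, lt_of_not_ge fun hmx => hw.not_ge ?_, rfl⟩
  rcases hmx.lt_or_eq with hmx | rfl
  · exact (hs.1 m x hm hx hmx).le
  · exact le_rfl

theorem IsInitialIso.val_le_of_agree_below {s t : PFnW X W d} (hs : s.IsInitialIso)
    (ht : t.IsStrictMono) {m : X} (hms : m < s.lg) (hmt : m < t.lg)
    (hagree : ∀ y (hys : y < s.lg) (hyt : y < t.lg), y < m → s.val y hys = t.val y hyt) :
    s.val m hms ≤ t.val m hmt := by
  by_contra! hlt
  obtain ⟨y, hys, hym, hy⟩ := hs.exists_lt_of_lt_val hms hlt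
  have hyt : y < t.lg := hym.trans hmt
  exact (ht y m hyt hmt hym).ne (hy ▸ hagree y hys hyt hym).symm

theorem IsInitialIso.le_of_lg_le [WellFoundedLT X] {s t : PFnW X W d} (hs : s.IsInitialIso)
    (ht : t.IsInitialIso) (h : s.lg ≤ t.lg) : s.le t := by
  refine ⟨h, fun x => ?_⟩
  induction x using WellFoundedLT.induction with
  | _ m ih =>
    intro hms
    have hagree : ∀ y (hys : y < s.lg) (hyt : y < t.lg), y < m → s.val y hys = t.val y hyt :=
      fun y hys _ hym => (ih y hym hys).symm
    exact le_antisymm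
      (ht.val_le_of_agree_below hs.1 _ hms fun y hyt hys hym => (hagree y hys hyt hym).symm)
      (hs.val_le_of_agree_below ht.1 hms _ hagree)

end PFnW

theorem statement17_general {X W : Type} [LinearOrder X] [LinearOrder W] (d : X)
    (hpfX : ∀ S : Set X, S.Nonempty →
      (∃ m ∈ S, ∀ x ∈ S, m ≤ x) ∧ (∃ m ∈ S, ∀ x ∈ S, x ≤ m)) :
    ∀ s t : PFnW X W d,
      -- `s` is an order-isomorphism onto an initial segment of `W`
      ((∀ (x y : X) (hx : x < s.lg) (hy : y < s.lg), x < y → s.val x hx < s.val y hy) ∧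
        (∀ w w' : W, (∃ x hx, s.val x hx = w) → w' ≤ w → ∃ x hx, s.val x hx = w')) →
      -- and likewise `t`
      ((∀ (x y : X) (hx : x < t.lg) (hy : y < t.lg), x < y → t.val x hx < t.val y hy) ∧
        (∀ w w' : W, (∃ x hx, t.val x hx = w) → w' ≤ w → ∃ x hx, t.val x hx = w')) →
      s.le t ∨ t.le s := by
  have : WellFoundedLT X := wellFoundedLT_of_forall_exists_min fun S hS => (hpfX S hS).1
  intro s t (hs : s.IsInitialIso) (ht : t.IsInitialIso)
  rcases le_total s.lg t.lg with h | h
  · exact Or.inl (hs.le_of_lg_le ht h)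
  · exact Or.inr (ht.le_of_lg_le hs h)

/-- Let `X` be a pseudofinite linear order and `W*` a pseudofinite
linear order. The family `ℱ` of tree elements which are one-to-one order-preserving
functions from an initial segment of `X` onto an initial segment of `W*` is linearly
ordered by the initial-segment relation. -/
theorem statement17 {X W : Type} [LinearOrder X] [LinearOrder W] (d : X)
    (hpfX : ∀ S : Set X, S.Nonempty →
      (∃ m ∈ S, ∀ x ∈ S, m ≤ x) ∧ (∃ m ∈ S, ∀ x ∈ S, x ≤ m))
    (hpfW : ∀ S : Set W, S.Nonempty →
      (∃ m ∈ S, ∀ x ∈ S, m ≤ x) ∧ (∃ m ∈ S, ∀ x ∈ S, x ≤ m)) :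
    ∀ s t : PFnW X W d,
      -- `s` is an order-isomorphism onto an initial segment of `W`
      ((∀ (x y : X) (hx : x < s.lg) (hy : y < s.lg), x < y → s.val x hx < s.val y hy) ∧
        (∀ w w' : W, (∃ x hx, s.val x hx = w) → w' ≤ w → ∃ x hx, s.val x hx = w')) →
      -- and likewise `t`
      ((∀ (x y : X) (hx : x < t.lg) (hy : y < t.lg), x < y → t.val x hx < t.val y hy) ∧
        (∀ w w' : W, (∃ x hx, t.val x hx = w) → w' ≤ w → ∃ x hx, t.val x hx = w')) →
      s.le t ∨ t.le s :=
  statement17_general d hpfX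

end Paper
end
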